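/- (Crosses force strict interior positions.) Let x, y ∈ B_A \ {0} with x ∼ y, λ ∈ Λ_x, ν ∈ Λ_y, and suppose there exist i < j ≤ deg x and l < k ≤ deg y with x(λ,i) ∼ y(ν,k) and x(λ,j) ∼ y(ν,l) (a cross). Then i ≥ 2, l ≥ 2, j ≤ deg x − 2, and k ≤ deg y − 2. -/

import Mathlib

open scoped Classical

def eVec (d α : ℕ) (i : Fin d) : Fin d → ℕ := fun j => if j = i then α else 0

def genSet (d α c : ℕ) (a : Fin c → Fin d → ℕ) : Set (Fin d → ℕ) :=
  Set.range (eVec d α) ∪ Set.range a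

def Bmon (d α c : ℕ) (a : Fin c → Fin d → ℕ) : AddSubmonoid (Fin d → ℕ) :=
  AddSubmonoid.closure (genSet d α c a)

def Amon (d α : ℕ) : AddSubmonoid (Fin d → ℕ) :=
  AddSubmonoid.closure (Set.range (eVec d α))

def BAset (d α c : ℕ) (a : Fin c → Fin d → ℕ) : Set (Fin d → ℕ) :=
  {x | x ∈ Bmon d α c a ∧ ∀ y ∈ Amon d α, y ≠ 0 → ∀ z ∈ Bmon d α c a, z + y ≠ x}

def equivA (α : ℕ) {d : ℕ} (x y : Fin d → ℕ) : Prop :=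
  ∀ i, (α : ℤ) ∣ (x i : ℤ) - (y i : ℤ)

def degv (α : ℕ) {d : ℕ} (x : Fin d → ℕ) : ℕ := (∑ i, x i) / α

def pval {d : ℕ} (x : Fin d → ℕ) (L : List (Fin d → ℕ)) (i : ℕ) : Fin d → ℕ :=
  x - (L.take i).sum

def starSeq (d α c : ℕ) (a : Fin c → Fin d → ℕ) (x : Fin d → ℕ)
    (L : List (Fin d → ℕ)) : Prop :=
  (∀ b ∈ L, b ∈ genSet d α c a) ∧
  ∀ i ≤ L.length, ∃ y ∈ Bmon d α c a, y + (L.take i).sum = x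

def Lam (d α c : ℕ) (a : Fin c → Fin d → ℕ) (x : Fin d → ℕ) :
    Set (List (Fin d → ℕ)) :=
  {L | starSeq d α c a x L ∧ L.length = degv α x}

noncomputable def DeltaF (α : ℕ) {d : ℕ} (x y : Fin d → ℕ)
    (L M : List (Fin d → ℕ)) : Finset (ℕ × ℕ) :=
  (Finset.range (L.length + 1) ×ˢ Finset.range (M.length + 1)).filter
    (fun p => equivA α (pval x L p.1) (pval y M p.2))

def hmin {d : ℕ} (x y : Fin d → ℕ) : Fin d → ℕ := fun i => min (x i) (y i)

def crossless (α : ℕ) {d : ℕ} (x y : Fin d → ℕ) (L M : List (Fin d → ℕ)) : Prop :=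
  ∀ p ∈ DeltaF α x y L M, ∀ q ∈ DeltaF α x y L M, p ≤ q ∨ q ≤ p

def isCross (α : ℕ) {d : ℕ} (x y : Fin d → ℕ) (L M : List (Fin d → ℕ))
    (i j l k : ℕ) : Prop :=
  i < j ∧ j ≤ L.length ∧ l < k ∧ k ≤ M.length ∧
  equivA α (pval x L i) (pval y M k) ∧ equivA α (pval x L j) (pval y M l)

noncomputable def deltaMin (d α c : ℕ) (a : Fin c → Fin d → ℕ)
    (x y : Fin d → ℕ) : ℕ :=
  sInf {n | ∃ L ∈ Lam d α c a x, ∃ M ∈ Lam d α c a y,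
    n + 2 = (DeltaF α x y L M).card}

def eqvSetoid (α : ℕ) {d : ℕ} (S : Set (Fin d → ℕ)) : Setoid S where
  r x y := equivA α x.1 y.1
  iseqv := by
    refine ⟨fun x i => ?_, fun {x y} h i => ?_, fun {x y z} h1 h2 i => ?_⟩
    · simp
    · exact dvd_sub_comm.mp (h i)
    · have := dvd_add (h1 i) (h2 i)
      simpa [sub_add_sub_cancel] using this

noncomputable def numClasses (d α c : ℕ) (a : Fin c → Fin d → ℕ) : ℕ :=
  Nat.card (Quotient (eqvSetoid α (BAset d α c a)))

section Helpers

variable {d α c : ℕ} {a : Fin c → Fin d → ℕ}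

lemma gen_sum (ha : ∀ i, ∑ j, a i j = α) {g : Fin d → ℕ}
    (hg : g ∈ genSet d α c a) : ∑ j, g j = α := by
  rcases hg with ⟨i, rfl⟩ | ⟨i, rfl⟩
  · simp [eVec]
  · exact ha i

lemma mem_Bmon_of_list {lst : List (Fin d → ℕ)} (h : ∀ b ∈ lst, b ∈ genSet d α c a) :
    lst.sum ∈ Bmon d α c a := by
  exact list_sum_mem (fun b hb => AddSubmonoid.subset_closure (h b hb))

lemma exists_list_of_mem_Bmon {v : Fin d → ℕ} (hv : v ∈ Bmon d α c a) :
    ∃ lst : List (Fin d → ℕ), (∀ b ∈ lst, b ∈ genSet d α c a) ∧ lst.sum = v := by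
  induction hv using AddSubmonoid.closure_induction with
  | mem z hz => exact ⟨[z], by simpa using hz, by simp⟩
  | zero => exact ⟨[], by simp, rfl⟩
  | add u v _ _ hu hv =>
      obtain ⟨l1, h1, e1⟩ := hu
      obtain ⟨l2, h2, e2⟩ := hv
      exact ⟨l1 ++ l2, by intro b hb; rcases List.mem_append.mp hb with h | h; exacts [h1 b h, h2 b h], by simp [e1, e2]⟩

lemma list_sum_comp (ha : ∀ i, ∑ j, a i j = α) {lst : List (Fin d → ℕ)}
    (h : ∀ b ∈ lst, b ∈ genSet d α c a) : ∑ t, lst.sum t = lst.length * α := by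
  induction lst with
  | nil => simp
  | cons b tl ih =>
      have hb := gen_sum ha (h b (by simp))
      have htl := ih (fun g hg => h g (by simp [hg]))
      simp only [List.sum_cons, List.length_cons, Pi.add_apply, Finset.sum_add_distrib, hb, htl]
      ring

lemma Bmon_sum (ha : ∀ i, ∑ j, a i j = α) {v : Fin d → ℕ} (hv : v ∈ Bmon d α c a) :
    ∃ n, ∑ t, v t = n * α := by
  obtain ⟨lst, h1, rfl⟩ := exists_list_of_mem_Bmon hv
  exact ⟨lst.length, list_sum_comp ha h1⟩

lemma mem_Amon_of_dvd {w : Fin d → ℕ} (h : ∀ i, α ∣ w i) : w ∈ Amon d α := by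
  have hw : w = ∑ i : Fin d, (w i / α) • eVec d α i := by
    funext s
    simp only [Finset.sum_apply, Pi.smul_apply, eVec, smul_eq_mul]
    rw [Finset.sum_eq_single s]
    · rw [if_pos rfl]; exact (Nat.div_mul_cancel (h s)).symm
    · intro b _ hb; rw [if_neg (Ne.symm hb), mul_zero]
    · intro hs; exact absurd (Finset.mem_univ s) hs
  rw [hw]
  exact AddSubmonoid.sum_mem _ fun i _ => AddSubmonoid.nsmul_mem _ (AddSubmonoid.subset_closure (Set.mem_range_self i)) _

lemma dvd_of_mem_Amon {w : Fin d → ℕ} (h : w ∈ Amon d α) : ∀ i, α ∣ w i := by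
  induction h using AddSubmonoid.closure_induction with
  | mem z hz => obtain ⟨i, rfl⟩ := hz; intro s; simp only [eVec]; split <;> simp
  | zero => intro s; simp
  | add u v _ _ hu hv => intro s; exact dvd_add (hu s) (hv s)

end Helpers

section Helpers2

variable {d α c : ℕ} {a : Fin c → Fin d → ℕ}

lemma pval_eq {x y : Fin d → ℕ} {L : List (Fin d → ℕ)} {p : ℕ}
    (h : y + (L.take p).sum = x) : pval x L p = y := by
  funext s
  have := congrFun h s
  simp only [Pi.add_apply] at this
  simp only [pval, Pi.sub_apply]
  omega

/-- Total component sum of x when L ∈ Lam x. -/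
lemma lam_tot (hα : 0 < α) (ha : ∀ i, ∑ j, a i j = α) {x : Fin d → ℕ}
    (hx : x ∈ Bmon d α c a) {L : List (Fin d → ℕ)} (hL : L ∈ Lam d α c a x) :
    ∑ t, x t = L.length * α := by
  obtain ⟨n, hn⟩ := Bmon_sum ha hx
  have : L.length = degv α x := hL.2
  rw [this, degv, hn, Nat.mul_div_cancel _ hα]

lemma pval_add_eq {x : Fin d → ℕ} {L : List (Fin d → ℕ)}
    (hL : L ∈ Lam d α c a x) {p : ℕ} (hp : p ≤ L.length) :
    pval x L p ∈ Bmon d α c a ∧ pval x L p + (L.take p).sum = x := by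
  obtain ⟨y, hy, hyx⟩ := hL.1.2 p hp
  rw [pval_eq hyx]
  exact ⟨hy, hyx⟩

lemma take_sum_comp (ha : ∀ i, ∑ j, a i j = α) {L : List (Fin d → ℕ)}
    (hmem : ∀ b ∈ L, b ∈ genSet d α c a) {p : ℕ} (hp : p ≤ L.length) :
    ∑ t, (L.take p).sum t = p * α := by
  have := list_sum_comp ha (lst := L.take p) (fun b hb => hmem b (List.mem_of_mem_take hb))
  rwa [List.length_take, min_eq_left hp] at this

lemma pval_sum (hα : 0 < α) (ha : ∀ i, ∑ j, a i j = α) {x : Fin d → ℕ}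
    (hx : x ∈ Bmon d α c a) {L : List (Fin d → ℕ)} (hL : L ∈ Lam d α c a x)
    {p : ℕ} (hp : p ≤ L.length) :
    (∑ t, pval x L p t) + p * α = L.length * α := by
  have h1 := (pval_add_eq hL hp).2
  have h2 : (∑ t, pval x L p t) + ∑ t, (L.take p).sum t = ∑ t, x t := by
    rw [← Finset.sum_add_distrib]; exact Finset.sum_congr rfl fun t _ => congrFun h1 t
  rw [take_sum_comp ha hL.1.1 hp] at h2
  rw [h2, lam_tot hα ha hx hL]

lemma pval_mem_BA {x : Fin d → ℕ} (hx : x ∈ BAset d α c a)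
    {L : List (Fin d → ℕ)} (hL : L ∈ Lam d α c a x) {p : ℕ} (hp : p ≤ L.length) :
    pval x L p ∈ BAset d α c a := by
  obtain ⟨hB, hadd⟩ := pval_add_eq hL hp
  refine ⟨hB, fun w hw hw0 z hz hzw => ?_⟩
  have hS : (L.take p).sum ∈ Bmon d α c a :=
    mem_Bmon_of_list (fun b hb => hL.1.1 b (List.mem_of_mem_take hb))
  have : (z + (L.take p).sum) + w = x := by
    rw [← hadd, ← hzw]; abel
  exact hx.2 w hw hw0 _ (add_mem hz hS) this

lemma BA_eq_of_le {u v : Fin d → ℕ} (hu : u ∈ BAset d α c a)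
    (hv : v ∈ Bmon d α c a) (he : equivA α u v) (hle : ∀ s, v s ≤ u s) : u = v := by
  set w : Fin d → ℕ := fun s => u s - v s with hw
  have hdvd : ∀ s, α ∣ w s := by
    intro s
    have h1 := he s
    have h2 : (α : ℤ) ∣ ((u s - v s : ℕ) : ℤ) := by
      rwa [Nat.cast_sub (hle s)]
    exact_mod_cast h2
  have hwA : w ∈ Amon d α := mem_Amon_of_dvd hdvd
  by_cases h0 : w = 0
  · funext s
    have := congrFun h0 s
    simp only [hw, Pi.zero_apply] at this
    have := hle s
    omega
  · exfalso
    refine hu.2 w hwA h0 v hv ?_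
    funext s
    simp only [Pi.add_apply, hw]
    have := hle s
    omega

lemma BA_eq_zero {u : Fin d → ℕ} (hu : u ∈ BAset d α c a)
    (he : ∀ s, (α : ℤ) ∣ (u s : ℤ)) : u = 0 := by
  refine BA_eq_of_le hu (zero_mem _) (fun s => by simpa using he s) (fun s => Nat.zero_le _)

end Helpers2

section Helpers3

variable {d α c : ℕ} {a : Fin c → Fin d → ℕ}

lemma eq_zero_of_sum_eq_zero {v : Fin d → ℕ} (h : ∑ t, v t = 0) : v = 0 := by
  funext s
  exact Finset.sum_eq_zero_iff.mp h s (Finset.mem_univ s)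

lemma gen_of_sum (hα : 0 < α) (ha : ∀ i, ∑ j, a i j = α) {u : Fin d → ℕ}
    (hu : u ∈ Bmon d α c a) (hsum : ∑ t, u t = α) : u ∈ genSet d α c a := by
  obtain ⟨lst, h1, rfl⟩ := exists_list_of_mem_Bmon hu
  have h2 := list_sum_comp ha h1
  have hlen : lst.length = 1 := by
    refine Nat.eq_of_mul_eq_mul_right hα ?_
    rw [← h2, hsum, one_mul]
  obtain ⟨g, rfl⟩ := List.length_eq_one_iff.mp hlen
  simpa using h1 g (by simp)

lemma eVec_ne_zero (hα : 0 < α) (t : Fin d) : eVec d α t ≠ 0 := by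
  intro h
  have := congrFun h t
  simp [eVec] at this
  omega

lemma BA_gen_eq_a (hα : 0 < α) (ha : ∀ i, ∑ j, a i j = α)
    (hae : ∀ i j, a i ≠ eVec d α j) {u : Fin d → ℕ}
    (hu : u ∈ BAset d α c a) (hsum : ∑ t, u t = α) :
    (∃ t, u = a t) ∧ ∀ s, u s < α := by
  have hg := gen_of_sum hα ha hu.1 hsum
  have hne : ∀ t, u ≠ eVec d α t := by
    intro t h
    refine hu.2 (eVec d α t) (AddSubmonoid.subset_closure (Set.mem_range_self t))
      (eVec_ne_zero hα t) 0 (zero_mem _) ?_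
    rw [zero_add, ← h]
  obtain ⟨t, rfl⟩ | ⟨t, rfl⟩ := hg
  · exact absurd rfl (hne t)
  · refine ⟨⟨t, rfl⟩, fun s => ?_⟩
    by_contra hcon
    push_neg at hcon
    have hle : a t s ≤ α := by
      rw [← hsum]
      exact Finset.single_le_sum (f := a t) (fun _ _ => Nat.zero_le _) (Finset.mem_univ s)
    have hseq : a t s = α := le_antisymm hle hcon
    have hrest : ∑ s' ∈ Finset.univ.erase s, a t s' = 0 := by
      have := Finset.add_sum_erase Finset.univ (a t) (Finset.mem_univ s)
      omega
    refine hae t s ?_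
    funext s'
    simp only [eVec]
    by_cases h' : s' = s
    · rw [if_pos h', h', hseq]
    · rw [if_neg h']
      exact Finset.sum_eq_zero_iff.mp hrest s' (Finset.mem_erase.mpr ⟨h', Finset.mem_univ s'⟩)

lemma cross_right (hα : 0 < α) (ha : ∀ i, ∑ j, a i j = α)
    (hae : ∀ i j, a i ≠ eVec d α j)
    {x y : Fin d → ℕ} (hx : x ∈ BAset d α c a) (hy : y ∈ BAset d α c a)
    {L M : List (Fin d → ℕ)} (hL : L ∈ Lam d α c a x) (hM : M ∈ Lam d α c a y)
    {i j l k : ℕ} (hcross : isCross α x y L M i j l k) :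
    j + 2 ≤ L.length := by
  obtain ⟨hij, hjn, hlk, hkm, E1, E2⟩ := hcross
  have hln : l ≤ M.length := le_trans (le_of_lt hlk) hkm
  have hin : i ≤ L.length := le_trans (le_of_lt hij) hjn
  -- Case j = n excluded
  have case1 : j ≠ L.length := by
    intro hjeq
    have hs := pval_sum hα ha hx.1 hL hjn
    rw [← hjeq] at hs
    have h0 : pval x L j = 0 := eq_zero_of_sum_eq_zero (by linarith)
    have hyl0 : pval y M l = 0 := by
      refine BA_eq_zero (pval_mem_BA hy hM hln) (fun s => ?_)
      have := E2 s
      rw [h0] at this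
      simp only [Pi.zero_apply, Nat.cast_zero, zero_sub] at this
      exact (dvd_neg.mp this)
    have hs2 := pval_sum hα ha hy.1 hM hln
    rw [hyl0] at hs2
    simp only [Pi.zero_apply, Finset.sum_const_zero, zero_add] at hs2
    have : l = M.length := Nat.eq_of_mul_eq_mul_right hα hs2
    omega
  -- Case j + 1 = n excluded
  have case2 : j + 1 ≠ L.length := by
    intro hjeq
    have hs := pval_sum hα ha hx.1 hL hjn
    have hsj : ∑ t, pval x L j t = α := by
      have : L.length * α = j * α + α := by rw [← hjeq]; ring
      linarith
    have hBA := pval_mem_BA hx hL hjn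
    obtain ⟨⟨t, hat⟩, hlt⟩ := BA_gen_eq_a hα ha hae hBA hsj
    -- pval y M l equals pval x L j
    have hpBA := pval_mem_BA hy hM hln
    have he' : equivA α (pval y M l) (pval x L j) := fun s => dvd_sub_comm.mp (E2 s)
    have hle : ∀ s, pval x L j s ≤ pval y M l s := by
      intro s
      by_contra hcon
      push_neg at hcon
      have hd : (α : ℤ) ∣ (pval x L j s : ℤ) - (pval y M l s : ℤ) := dvd_sub_comm.mp (he' s)
      have hpos : (0:ℤ) < (pval x L j s : ℤ) - (pval y M l s : ℤ) := by
        omega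
      have := Int.le_of_dvd hpos hd
      have := hlt s
      omega
    have heq : pval y M l = pval x L j :=
      BA_eq_of_le hpBA (pval_add_eq hL hjn).1 he' hle
    -- degree of pval y M l is 1, hence l + 1 = M.length
    have hs2 := pval_sum hα ha hy.1 hM hln
    rw [heq, hsj] at hs2
    have hlm : l + 1 = M.length := by
      refine Nat.eq_of_mul_eq_mul_right hα ?_
      have : (l + 1) * α = α + l * α := by ring
      linarith
    have hkeq : k = M.length := by omega
    -- pval y M k = 0
    have hs3 := pval_sum hα ha hy.1 hM hkm
    rw [← hkeq] at hs3
    have h0 : pval y M k = 0 := eq_zero_of_sum_eq_zero (by linarith)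
    -- pval x L i = 0, so i = n
    have hxi0 : pval x L i = 0 := by
      refine BA_eq_zero (pval_mem_BA hx hL hin) (fun s => ?_)
      have := E1 s
      rw [h0] at this
      simpa using this
    have hs4 := pval_sum hα ha hx.1 hL hin
    rw [hxi0] at hs4
    simp only [Pi.zero_apply, Finset.sum_const_zero, zero_add] at hs4
    have : i = L.length := Nat.eq_of_mul_eq_mul_right hα hs4
    omega
  omega

end Helpers3

section Helpers4

variable {d α c : ℕ} {a : Fin c → Fin d → ℕ}

lemma lam_sum_eq (hα : 0 < α) (ha : ∀ i, ∑ j, a i j = α) {x : Fin d → ℕ}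
    (hx : x ∈ Bmon d α c a) {L : List (Fin d → ℕ)} (hL : L ∈ Lam d α c a x) :
    L.sum = x := by
  have h := (pval_add_eq hL (le_refl L.length)).2
  have hz : pval x L L.length = 0 := by
    apply eq_zero_of_sum_eq_zero
    have := pval_sum hα ha hx hL (le_refl L.length)
    linarith
  rw [hz, List.take_length] at h
  simpa using h

lemma take_rev_sum {x : Fin d → ℕ} {L : List (Fin d → ℕ)} (hsum : L.sum = x)
    {p : ℕ} (hp : p ≤ L.length) :
    (L.take (L.length - p)).sum + (L.reverse.take p).sum = x := by
  have h1 : L.reverse.take p = (L.drop (L.length - p)).reverse := by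
    conv_lhs => rw [← List.take_append_drop (L.length - p) L]
    rw [List.reverse_append]
    exact List.take_left' (by rw [List.length_reverse, List.length_drop]; omega)
  rw [h1, List.sum_reverse, ← hsum]
  exact List.sum_take_add_sum_drop L (L.length - p)

lemma reverse_mem_Lam (hα : 0 < α) (ha : ∀ i, ∑ j, a i j = α) {x : Fin d → ℕ}
    (hx : x ∈ Bmon d α c a) {L : List (Fin d → ℕ)} (hL : L ∈ Lam d α c a x) :
    L.reverse ∈ Lam d α c a x := by
  have hsum := lam_sum_eq hα ha hx hL
  refine ⟨⟨fun b hb => hL.1.1 b (List.mem_reverse.mp hb), fun p hp => ?_⟩,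
    by rw [List.length_reverse]; exact hL.2⟩
  rw [List.length_reverse] at hp
  exact ⟨(L.take (L.length - p)).sum,
    mem_Bmon_of_list (fun b hb => hL.1.1 b (List.mem_of_mem_take hb)),
    take_rev_sum hsum hp⟩

lemma pval_reverse (hα : 0 < α) (ha : ∀ i, ∑ j, a i j = α) {x : Fin d → ℕ}
    (hx : x ∈ Bmon d α c a) {L : List (Fin d → ℕ)} (hL : L ∈ Lam d α c a x)
    {p : ℕ} (hp : p ≤ L.length) :
    pval x L.reverse p = (L.take (L.length - p)).sum :=
  pval_eq (take_rev_sum (lam_sum_eq hα ha hx hL) hp)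

lemma equivA_take {x y : Fin d → ℕ} (hxy : equivA α x y)
    {L M : List (Fin d → ℕ)} (hL : L ∈ Lam d α c a x) (hM : M ∈ Lam d α c a y)
    {p q : ℕ} (hp : p ≤ L.length) (hq : q ≤ M.length)
    (hpq : equivA α (pval x L p) (pval y M q)) :
    equivA α ((L.take p).sum) ((M.take q).sum) := by
  intro s
  have e1 := congrFun (pval_add_eq hL hp).2 s
  have e2 := congrFun (pval_add_eq hM hq).2 s
  simp only [Pi.add_apply] at e1 e2
  have hS : (((L.take p).sum) s : ℤ) = (x s : ℤ) - (pval x L p s : ℤ) := by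
    rw [← e1]; push_cast; ring
  have hT : (((M.take q).sum) s : ℤ) = (y s : ℤ) - (pval y M q s : ℤ) := by
    rw [← e2]; push_cast; ring
  rw [hS, hT]
  have h1 := hxy s
  have h2 := hpq s
  have : (x s : ℤ) - (pval x L p s : ℤ) - ((y s : ℤ) - (pval y M q s : ℤ))
      = ((x s : ℤ) - y s) - ((pval x L p s : ℤ) - (pval y M q s : ℤ)) := by ring
  rw [this]
  exact dvd_sub h1 h2

lemma equivA_symm {x y : Fin d → ℕ} (h : equivA α x y) : equivA α y x :=
  fun s => dvd_sub_comm.mp (h s)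

end Helpers4

/-- a cross forces strict interior positions:
`i ≥ 2`, `l ≥ 2`, `j ≤ deg x − 2`, `k ≤ deg y − 2`. -/
theorem cross_interior (d α c : ℕ) (hd : 0 < d) (hα : 0 < α) (hc : 0 < c)
    (a : Fin c → Fin d → ℕ) (ha : ∀ i, ∑ j, a i j = α)
    (hae : ∀ i j, a i ≠ eVec d α j)
    (x y : Fin d → ℕ) (hx : x ∈ BAset d α c a) (hx0 : x ≠ 0)
    (hy : y ∈ BAset d α c a) (hy0 : y ≠ 0) (hxy : equivA α x y)
    (L : List (Fin d → ℕ)) (hL : L ∈ Lam d α c a x)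
    (M : List (Fin d → ℕ)) (hM : M ∈ Lam d α c a y)
    (i j l k : ℕ) (hcross : isCross α x y L M i j l k) :
    2 ≤ i ∧ 2 ≤ l ∧ j + 2 ≤ degv α x ∧ k + 2 ≤ degv α y := by
  obtain ⟨hij, hjn, hlk, hkm, E1, E2⟩ := hcross
  have hcr : isCross α x y L M i j l k := ⟨hij, hjn, hlk, hkm, E1, E2⟩
  have hj2 : j + 2 ≤ L.length := cross_right hα ha hae hx hy hL hM hcr
  have hk2 : k + 2 ≤ M.length :=
    cross_right hα ha hae hy hx hM hL
      ⟨hlk, hkm, hij, hjn, equivA_symm E2, equivA_symm E1⟩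
  have hLr := reverse_mem_Lam hα ha hx.1 hL
  have hMr := reverse_mem_Lam hα ha hy.1 hM
  have hin : i ≤ L.length := le_of_lt (lt_of_lt_of_le hij hjn)
  have hln : l ≤ M.length := le_of_lt (lt_of_lt_of_le hlk hkm)
  have pvrL : ∀ p ≤ L.length, pval x L.reverse (L.length - p) = (L.take p).sum := by
    intro p hp
    rw [pval_reverse hα ha hx.1 hL (by omega)]
    have e : L.length - (L.length - p) = p := by omega
    rw [e]
  have pvrM : ∀ p ≤ M.length, pval y M.reverse (M.length - p) = (M.take p).sum := by
    intro p hp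
    rw [pval_reverse hα ha hy.1 hM (by omega)]
    have e : M.length - (M.length - p) = p := by omega
    rw [e]
  have E1r : equivA α (pval x L.reverse (L.length - j)) (pval y M.reverse (M.length - l)) := by
    rw [pvrL j hjn, pvrM l hln]
    exact equivA_take hxy hL hM hjn hln E2
  have E2r : equivA α (pval x L.reverse (L.length - i)) (pval y M.reverse (M.length - k)) := by
    rw [pvrL i hin, pvrM k hkm]
    exact equivA_take hxy hL hM hin hkm E1
  have hcrr : isCross α x y L.reverse M.reverse
      (L.length - j) (L.length - i) (M.length - k) (M.length - l) := by
    refine ⟨by omega, by rw [List.length_reverse]; omega, by omega,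
      by rw [List.length_reverse]; omega, E1r, E2r⟩
  have hi2 : (L.length - i) + 2 ≤ L.reverse.length :=
    cross_right hα ha hae hx hy hLr hMr hcrr
  rw [List.length_reverse] at hi2
  have hcrr' : isCross α y x M.reverse L.reverse
      (M.length - k) (M.length - l) (L.length - j) (L.length - i) := by
    refine ⟨by omega, by rw [List.length_reverse]; omega, by omega,
      by rw [List.length_reverse]; omega, equivA_symm E2r, equivA_symm E1r⟩
  have hl2 : (M.length - l) + 2 ≤ M.reverse.length :=
    cross_right hα ha hae hy hx hMr hLr hcrr'
  rw [List.length_reverse] at hl2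
  refine ⟨by omega, by omega, ?_, ?_⟩
  · rw [← hL.2]; exact hj2
  · rw [← hM.2]; exact hk2
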